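/- Let w ∈ S_n and let ζ = t_{i_1,q}⋯t_{i_p,q} make wζ special k-superior to w of degree p (so i_1,...,i_p ≤ k < q, w(q) > w(i_1) > ... > w(i_p), and ℓ(wζ) = ℓ(w) + p). If i_a = k for some a, then w·ζ·t_{k,q} is special (k−1)-superior to w of degree p−1. -/

import Mathlib

open Equiv MvPolynomial
open scoped Classical

/-- Coxeter length of a permutation of `Fin n`: the number of inversions. -/
noncomputable def len {n : ℕ} (w : Equiv.Perm (Fin n)) : ℕ :=
  (Finset.univ.filter (fun p : Fin n × Fin n => p.1 < p.2 ∧ w p.2 < w p.1)).card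

/-- The simple reflection swapping the 0-based positions `a` and `a+1`;
this is the 1-based simple reflection `s_{a+1}`. -/
def sr0 (n : ℕ) (a : ℕ) : Equiv.Perm (Fin n) :=
  if h : a + 1 < n then Equiv.swap ⟨a, Nat.lt_of_succ_lt h⟩ ⟨a + 1, h⟩ else 1

/-- `c[k,m] = s_{k-m+1} ⋯ s_{k-1} s_k` (1-based indices), with `c[k,0] = e`. -/
def cyc (n k m : ℕ) : Equiv.Perm (Fin n) :=
  ((List.range m).map (fun t => sr0 n (k - m + t))).prod

/-- The coordinate weight `L_i` (1-based), i.e. the variable `X (i-1)`. -/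
noncomputable def LL (n : ℕ) (i : ℕ) : MvPolynomial (Fin n) ℚ :=
  if h : i - 1 < n then X ⟨i - 1, h⟩ else 0

/-- The simple root `α_{a+1} = L_{a+1} - L_{a+2}` (0-based `a`). -/
noncomputable def alphaR (n a : ℕ) : MvPolynomial (Fin n) ℚ :=
  if h : a + 1 < n then X ⟨a, Nat.lt_of_succ_lt h⟩ - X ⟨a + 1, h⟩ else 0

/-- The fundamental weight `χ_i = L_1 + ⋯ + L_i` (1-based `i`). -/
noncomputable def chiW (n i : ℕ) : MvPolynomial (Fin n) ℚ :=
  ∑ j ∈ Finset.univ.filter (fun j : Fin n => (j : ℕ) < i), X j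

/-- `∏_{β ∈ Δ₊ ∩ w⁻¹Δ₋} β`, the value `ξ^w(w)`. -/
noncomputable def topVal {n : ℕ} (w : Equiv.Perm (Fin n)) : MvPolynomial (Fin n) ℚ :=
  ∏ p ∈ Finset.univ.filter (fun p : Fin n × Fin n => p.1 < p.2 ∧ w p.2 < w p.1),
    (X p.1 - X p.2)

/-- Bruhat order on the symmetric group. -/
def bruhatLE {n : ℕ} (w v : Equiv.Perm (Fin n)) : Prop :=
  Relation.ReflTransGen
    (fun x y => (∃ i j : Fin n, y = x * Equiv.swap i j) ∧ len y = len x + 1) w v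

/-- The characterization of the family of equivariant Schubert classes `ξ^w : W → S(h*)`:
support condition, value at `w`, and the divided-difference recursion
`𝒜_a ξ^w = ξ^{w s_a}` if `w s_a < w` and `0` otherwise, where
`(𝒜_a f)(v) = (f(v s_a) - f(v))/(v·α_a)`. -/
def IsXi {n : ℕ} (xi : Equiv.Perm (Fin n) → Equiv.Perm (Fin n) → MvPolynomial (Fin n) ℚ) :
    Prop :=
  (∀ w v, ¬ bruhatLE w v → xi w v = 0) ∧
  (∀ w, xi w w = topVal w) ∧
  (∀ w v (a : ℕ), a + 1 < n →
    (len (w * sr0 n a) < len w →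
      xi w (v * sr0 n a) - xi w v = (rename ⇑v (alphaR n a)) * xi (w * sr0 n a) v) ∧
    (len w < len (w * sr0 n a) → xi w (v * sr0 n a) = xi w v))

/-- The permutation `t_{i_1,q} ⋯ t_{i_s,q}` determined by the list `l = [i_1, …, i_s]`
and the index `q`. -/
def cycPerm {n : ℕ} (l : List (Fin n)) (q : Fin n) : Equiv.Perm (Fin n) :=
  (l.map (fun i => Equiv.swap i q)).prod

/-- The data `(l, q)` with `l = [i_1, …, i_s]` defines a cycle `ζ = t_{i_1,q} ⋯ t_{i_s,q}`
such that `wζ` is special `k`-superior to `w` of degree `s` (1-based `k`):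
`i_1, …, i_s ≤ k < q`, `w(q) > w(i_1) > ⋯ > w(i_s)`, and `ℓ(wζ) = ℓ(w) + s`. -/
def IsSpecialCycle {n : ℕ} (w : Equiv.Perm (Fin n)) (k : ℕ) (l : List (Fin n)) (q : Fin n) :
    Prop :=
  l ≠ [] ∧ (q :: l).Nodup ∧ (∀ i ∈ l, (i : ℕ) < k) ∧ k ≤ (q : ℕ) ∧
  (q :: l).Chain' (fun a b => w b < w a) ∧
  len (w * cycPerm l q) = len w + l.length

/-- `u` is special `k`-superior to `w` of degree `p` (1-based `k`):
`u = w ζ₁ ⋯ ζ_r` for pairwise disjoint cycles `ζ_i` as in `IsSpecialCycle`,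
with degrees summing to `p`. -/
def SpecialSuperior {n : ℕ} (w u : Equiv.Perm (Fin n)) (k p : ℕ) : Prop :=
  ∃ L : List (List (Fin n) × Fin n),
    (∀ c ∈ L, IsSpecialCycle w k c.1 c.2) ∧
    L.Pairwise (fun c d => ∀ x ∈ c.2 :: c.1, x ∉ d.2 :: d.1) ∧
    u = w * (L.map (fun c => cycPerm c.1 c.2)).prod ∧
    (L.map (fun c => c.1.length)).sum = p

/-- The set of indices of `u > w`: `𝓘 = {i ≤ k | w⁻¹u(i) ≠ i}` (stored 0-based,
so `i` ranges over 0-based positions `< k`). -/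
noncomputable def idxSet {n : ℕ} (w u : Equiv.Perm (Fin n)) (k : ℕ) : Finset ℕ :=
  (Finset.range k).filter (fun i => ∃ h : i < n, (w⁻¹ * u) ⟨i, h⟩ ≠ ⟨i, h⟩)

/-- The 0-based positions `< k` not in `𝓘`, listed in decreasing order; its `(j-1)`-st
entry is the 0-based version of `r_j`. -/
noncomputable def freeList {n : ℕ} (w u : Equiv.Perm (Fin n)) (k : ℕ) : List ℕ :=
  (((Finset.range k) \ idxSet w u k).sort (· ≤ ·)).reverse

/-- `λ_j = #{i ∈ 𝓘 | i < r_j}` (1-based `j`). -/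
noncomputable def lamFn {n : ℕ} (w u : Equiv.Perm (Fin n)) (k : ℕ) (j : ℕ) : ℕ :=
  ((idxSet w u k).filter (fun i => i < (freeList w u k).getD (j - 1) 0)).card

/-- The associated element `v(u,w,k) = w π₁ π₂ ⋯ π_{k-p}` where
`π_j = s_{λ_{k-p-j+1}+j-1} ⋯ s_{j+1} s_j` (1-based) if `λ_{k-p-j+1} ≠ 0` and `π_j = e`
otherwise. -/
noncomputable def assocElt {n : ℕ} (w u : Equiv.Perm (Fin n)) (k p : ℕ) :
    Equiv.Perm (Fin n) :=
  w * ((List.range (k - p)).map (fun j0 =>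
        ((List.range (lamFn w u k (k - p - j0))).reverse.map
          (fun t => sr0 n (j0 + t))).prod)).prod

lemma len_mul_swap_ge {n : ℕ} (v : Equiv.Perm (Fin n)) (i q : Fin n)
    (hiq : i < q) (hv : v i < v q) : len v + 1 ≤ len (v * Equiv.swap i q) := by
  classical
  have hne : i ≠ q := ne_of_lt hiq
  have hlen' : len (v * Equiv.swap i q) =
      (Finset.univ.filter (fun p : Fin n × Fin n =>
        Equiv.swap i q p.1 < Equiv.swap i q p.2 ∧ v p.2 < v p.1)).card := by
    unfold len
    refine Finset.card_equiv (Equiv.prodCongr (Equiv.swap i q) (Equiv.swap i q)) ?_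
    rintro ⟨a, b⟩
    rw [Finset.mem_filter, Finset.mem_filter]
    simp only [Finset.mem_filter, Finset.mem_univ, true_and, Equiv.prodCongr_apply,
      Prod.map, Equiv.Perm.mul_apply, Equiv.swap_apply_self]
  set A := (Finset.univ.filter (fun p : Fin n × Fin n => p.1 < p.2 ∧ v p.2 < v p.1)) with hA
  set B := (Finset.univ.filter (fun p : Fin n × Fin n =>
      Equiv.swap i q p.1 < Equiv.swap i q p.2 ∧ v p.2 < v p.1)) with hB
  set φ : Fin n × Fin n → Fin n × Fin n := fun p =>
    if p.1 = i ∧ p.2 < q then (q, p.2)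
    else if p.2 = q ∧ i < p.1 then (p.1, i) else p with hφ
  have hqiA : (q, i) ∉ A := by
    simp only [hA, Finset.mem_filter, Finset.mem_univ, true_and, not_and]
    intro h
    exact absurd (lt_trans h hiq) (lt_irrefl q)
  have hφqi : φ (q, i) = (q, i) := by
    simp only [hφ]
    rw [if_neg, if_neg]
    · rintro ⟨h2, -⟩; exact hne h2
    · rintro ⟨h1, -⟩; exact hne h1.symm
  have hmaps : ∀ p ∈ insert (q, i) A, φ p ∈ B := by
    rintro ⟨a, b⟩ hp
    rcases Finset.mem_insert.mp hp with h | h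
    · rw [h, hφqi]
      simp only [hB, Finset.mem_filter, Finset.mem_univ, true_and]
      rw [Equiv.swap_apply_left, Equiv.swap_apply_right]
      exact ⟨hiq, hv⟩
    · simp only [hA, Finset.mem_filter, Finset.mem_univ, true_and] at h
      obtain ⟨hlt, hvlt⟩ := h
      simp only [hB, hφ, Finset.mem_filter, Finset.mem_univ, true_and]
      by_cases c1 : a = i ∧ b < q
      · rw [if_pos c1]
        obtain ⟨e1, e2⟩ := c1
        subst e1
        have hbi : b ≠ a := ne_of_gt hlt
        have hbq : b ≠ q := ne_of_lt e2
        refine ⟨?_, lt_trans hvlt hv⟩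
        show Equiv.swap a q q < Equiv.swap a q b
        rw [Equiv.swap_apply_right, Equiv.swap_apply_of_ne_of_ne hbi hbq]
        exact hlt
      · rw [if_neg c1]
        by_cases c2 : b = q ∧ i < a
        · rw [if_pos c2]
          obtain ⟨e1, e2⟩ := c2
          subst e1
          have haq : a ≠ b := ne_of_lt hlt
          have hai : a ≠ i := ne_of_gt e2
          refine ⟨?_, lt_trans hv hvlt⟩
          show Equiv.swap i b a < Equiv.swap i b i
          rw [Equiv.swap_apply_left, Equiv.swap_apply_of_ne_of_ne hai haq]
          exact hlt
        · rw [if_neg c2]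
          refine ⟨?_, hvlt⟩
          show Equiv.swap i q a < Equiv.swap i q b
          by_cases d1 : a = q
          · subst d1
            have h2 : a < b := hlt
            have hbq : b ≠ a := ne_of_gt h2
            have hbi : b ≠ i := ne_of_gt (lt_trans hiq h2)
            rw [Equiv.swap_apply_right, Equiv.swap_apply_of_ne_of_ne hbi hbq]
            exact lt_trans hiq h2
          · by_cases hai : a = i
            · subst hai
              have hbq : ¬ b < q := fun hh => c1 ⟨rfl, hh⟩
              have hbq' : b ≠ q := by
                intro e; subst e; exact absurd hvlt (not_lt_of_gt hv)
              have hqb : q < b := lt_of_le_of_ne (le_of_not_gt hbq) (Ne.symm hbq')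
              rw [Equiv.swap_apply_left,
                Equiv.swap_apply_of_ne_of_ne (ne_of_gt (lt_trans hiq hqb)) hbq']
              exact hqb
            rw [Equiv.swap_apply_of_ne_of_ne hai d1]
            by_cases d2 : b = q
            · subst d2
              have hlt2 : a < i := by
                rcases lt_trichotomy a i with h | h | h
                · exact h
                · exact absurd h hai
                · exact absurd ⟨rfl, h⟩ c2
              rw [Equiv.swap_apply_right]
              exact hlt2
            · by_cases d3 : b = i
              · subst d3
                rw [Equiv.swap_apply_left]
                exact lt_trans hlt hiq
              · rw [Equiv.swap_apply_of_ne_of_ne d3 d2]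
                exact hlt
  have hinj : Set.InjOn φ ↑(insert (q, i) A) := by
    rintro ⟨a, b⟩ hp ⟨a', b'⟩ hp' heq
    have hd : (a = q ∧ b = i) ∨ a < b := by
      rcases Finset.mem_insert.mp (by exact_mod_cast hp) with h | h
      · left; exact ⟨congrArg Prod.fst h, congrArg Prod.snd h⟩
      · right; simp only [hA, Finset.mem_filter, Finset.mem_univ, true_and] at h; exact h.1
    have hd' : (a' = q ∧ b' = i) ∨ a' < b' := by
      rcases Finset.mem_insert.mp (by exact_mod_cast hp') with h | h
      · left; exact ⟨congrArg Prod.fst h, congrArg Prod.snd h⟩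
      · right; simp only [hA, Finset.mem_filter, Finset.mem_univ, true_and] at h; exact h.1
    simp only [hφ] at heq
    split_ifs at heq <;>
      simp only [Prod.mk.injEq, Fin.ext_iff, Fin.lt_iff_val_lt_val, not_and, not_lt] at * <;>
      omega
  have hcard : (insert (q, i) A).card ≤ B.card :=
    Finset.card_le_card_of_injOn φ hmaps hinj
  rw [Finset.card_insert_of_notMem hqiA] at hcard
  rw [hlen']
  have hlenA : len v = A.card := rfl
  omega

lemma cycPerm_nil {n : ℕ} (q : Fin n) : cycPerm [] q = 1 := rfl

lemma cycPerm_cons {n : ℕ} (a : Fin n) (l : List (Fin n)) (q : Fin n) :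
    cycPerm (a :: l) q = Equiv.swap a q * cycPerm l q := by
  simp [cycPerm]

lemma cycPerm_append {n : ℕ} (l₁ l₂ : List (Fin n)) (q : Fin n) :
    cycPerm (l₁ ++ l₂) q = cycPerm l₁ q * cycPerm l₂ q := by
  simp [cycPerm]

lemma cycPerm_apply_of_not_mem {n : ℕ} (l : List (Fin n)) (q m : Fin n)
    (hm : m ∉ l) (hq : m ≠ q) : cycPerm l q m = m := by
  induction l with
  | nil => rfl
  | cons a l ih =>
    rw [cycPerm_cons, Equiv.Perm.mul_apply, ih (fun h => hm (List.mem_cons_of_mem _ h))]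
    exact Equiv.swap_apply_of_ne_of_ne (fun h => hm (h ▸ List.mem_cons_self (a := a))) hq

lemma cycPerm_apply_q_mem {n : ℕ} (l : List (Fin n)) (q : Fin n) :
    cycPerm l q q ∈ q :: l := by
  induction l with
  | nil => simp [cycPerm_nil]
  | cons a l ih =>
    rw [cycPerm_cons, Equiv.Perm.mul_apply]
    set x := cycPerm l q q with hx
    rcases eq_or_ne x a with h | ha
    · rw [h, Equiv.swap_apply_left]
      exact List.mem_cons_self (a := q)
    · rcases eq_or_ne x q with h | hq
      · rw [h, Equiv.swap_apply_right]
        exact List.mem_cons_of_mem _ (List.mem_cons_self (a := a))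
      · rw [Equiv.swap_apply_of_ne_of_ne ha hq]
        rcases List.mem_cons.mp ih with h | h
        · exact absurd h hq
        · exact List.mem_cons_of_mem _ (List.mem_cons_of_mem _ h)

lemma swap_conj_cycPerm {n : ℕ} (B : List (Fin n)) (kf q : Fin n) (hkq : kf ≠ q)
    (hkf : kf ∉ B) (hq : q ∉ B) :
    Equiv.swap kf q * cycPerm B q * Equiv.swap kf q = cycPerm B kf := by
  induction B with
  | nil => simp [cycPerm_nil, Equiv.swap_mul_self]
  | cons b B ih =>
    have hbk : b ≠ kf := fun h => hkf (h ▸ List.mem_cons_self (a := b))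
    have hbq : b ≠ q := fun h => hq (h ▸ List.mem_cons_self (a := b))
    have ih' := ih (fun h => hkf (List.mem_cons_of_mem _ h))
      (fun h => hq (List.mem_cons_of_mem _ h))
    rw [cycPerm_cons, cycPerm_cons]
    have key : Equiv.swap b kf =
        Equiv.swap kf q * Equiv.swap b q * Equiv.swap kf q := by
      have := Equiv.swap_apply_apply (Equiv.swap kf q) b q
      rw [Equiv.swap_apply_of_ne_of_ne hbk hbq, Equiv.swap_apply_right] at this
      rw [this, Equiv.swap_inv]
    calc Equiv.swap kf q * (Equiv.swap b q * cycPerm B q) * Equiv.swap kf q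
        = (Equiv.swap kf q * Equiv.swap b q * Equiv.swap kf q) *
          (Equiv.swap kf q * cycPerm B q * Equiv.swap kf q) := by
          simp [mul_assoc, Equiv.swap_mul_self]
      _ = Equiv.swap b kf * cycPerm B kf := by rw [ih', ← key]

lemma commute_swap_cycPerm {n : ℕ} (B : List (Fin n)) (kf a q : Fin n)
    (haB : a ∉ B) (hak : a ≠ kf) (hqB : q ∉ B) (hqk : q ≠ kf) :
    Commute (Equiv.swap a q) (cycPerm B kf) := by
  rcases eq_or_ne a q with h | haq
  · subst h
    rw [Equiv.swap_self, ← Equiv.Perm.one_def]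
    exact Commute.one_left _
  · apply Equiv.Perm.Disjoint.commute
    intro x
    by_cases hx : x ∈ B ∨ x = kf
    · left
      rcases hx with hx | hx
      · exact Equiv.swap_apply_of_ne_of_ne (fun h => haB (h ▸ hx)) (fun h => hqB (h ▸ hx))
      · subst hx
        exact Equiv.swap_apply_of_ne_of_ne (Ne.symm hak) (Ne.symm hqk)
    · right
      push_neg at hx
      exact cycPerm_apply_of_not_mem B kf x hx.1 hx.2

lemma geLen {n : ℕ} : ∀ (l : List (Fin n)) (v : Equiv.Perm (Fin n)) (q : Fin n),
    (q :: l).Nodup → (∀ i ∈ l, i < q) →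
    (q :: l).Pairwise (fun a b => v b < v a) →
    len v + l.length ≤ len (v * cycPerm l q)
  | [], v, q, _, _, _ => by simp [cycPerm_nil]
  | a :: l, v, q, hnd, hbd, hpw => by
    have hmem : ∀ x ∈ l, x ≠ a ∧ x ≠ q := by
      intro x hx
      constructor
      · intro h; subst h
        exact (List.nodup_cons.mp (List.nodup_cons.mp hnd).2).1 hx
      · intro h; subst h
        exact (List.nodup_cons.mp hnd).1 (List.mem_cons_of_mem _ hx)
    obtain ⟨hq1, hpw'⟩ := List.pairwise_cons.mp hpw
    obtain ⟨ha1, hpw''⟩ := List.pairwise_cons.mp hpw'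
    have hav : v a < v q := hq1 a (List.mem_cons_self (a := a))
    have haq : a < q := hbd a (List.mem_cons_self (a := a))
    have h1 := len_mul_swap_ge v a q haq hav
    have step : v * cycPerm (a :: l) q = (v * Equiv.swap a q) * cycPerm l q := by
      rw [cycPerm_cons, mul_assoc]
    set v1 := v * Equiv.swap a q with hv1
    have happ : ∀ x ∈ l, v1 x = v x := by
      intro x hx
      obtain ⟨h1x, h2x⟩ := hmem x hx
      simp [hv1, Equiv.Perm.mul_apply, Equiv.swap_apply_of_ne_of_ne h1x h2x]
    have happq : v1 q = v a := by
      simp [hv1, Equiv.Perm.mul_apply, Equiv.swap_apply_right]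
    have hpw1 : (q :: l).Pairwise (fun x y => v1 y < v1 x) := by
      rw [List.pairwise_cons]
      constructor
      · intro x hx
        rw [happ x hx, happq]
        exact ha1 x hx
      · refine hpw''.imp_of_mem ?_
        intro x y hx hy h
        rw [happ x hx, happ y hy]
        exact h
    have hnd1 : (q :: l).Nodup := by
      rw [List.nodup_cons]
      refine ⟨fun h => (List.nodup_cons.mp hnd).1 (List.mem_cons_of_mem _ h), ?_⟩
      exact (List.nodup_cons.mp (List.nodup_cons.mp hnd).2).2
    have h2 := geLen l v1 q hnd1 (fun i hi => hbd i (List.mem_cons_of_mem _ hi)) hpw1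
    rw [step]
    simp only [List.length_cons]
    omega

lemma splitLen {n : ℕ} : ∀ (A : List (Fin n)) (v : Equiv.Perm (Fin n)) (B : List (Fin n))
    (q kf : Fin n),
    (q :: (A ++ kf :: B)).Nodup →
    (∀ x ∈ A ++ kf :: B, x < q) →
    (∀ b ∈ B, b < kf) →
    (q :: (A ++ kf :: B)).Pairwise (fun a b => v b < v a) →
    len (v * cycPerm (A ++ kf :: B) q) = len v + (A ++ kf :: B).length →
    len (v * cycPerm A q) = len v + A.length ∧
      len (v * cycPerm B kf) = len v + B.length
  | [], v, B, q, kf, hnd, hbd, hbB, hpw, hlen => by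
    have hkB : List.Sublist (kf :: B) (q :: ([] ++ kf :: B)) := (List.sublist_cons_self q _)
    have hndkB : (kf :: B).Nodup := List.Nodup.sublist hkB hnd
    have hkq : kf ≠ q := by
      intro h
      exact (List.nodup_cons.mp hnd).1 (h ▸ List.mem_cons_self (a := kf))
    have hkfB : kf ∉ B := (List.nodup_cons.mp hndkB).1
    have hqB : q ∉ B := fun h =>
      (List.nodup_cons.mp hnd).1 (List.mem_cons_of_mem _ h)
    obtain ⟨hq1, hpwt⟩ := List.pairwise_cons.mp hpw
    constructor
    · simp [cycPerm_nil]
    · set y := v * cycPerm B kf with hy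
      have hconj : Equiv.swap kf q * cycPerm B q * Equiv.swap kf q = cycPerm B kf :=
        swap_conj_cycPerm B kf q hkq hkfB hqB
      have hcy : y * Equiv.swap kf q = v * cycPerm ([] ++ kf :: B) q := by
        rw [hy, ← hconj]
        simp only [List.nil_append, cycPerm_cons]
        simp [mul_assoc, Equiv.swap_mul_self]
      have hykf : y kf < y q := by
        have h1 : y q = v q := by
          rw [hy, Equiv.Perm.mul_apply, cycPerm_apply_of_not_mem B kf q hqB (Ne.symm hkq)]
        have h2 : y kf = v (cycPerm B kf kf) := by rw [hy, Equiv.Perm.mul_apply]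
        rw [h1, h2]
        exact hq1 _ (cycPerm_apply_q_mem B kf)
      have hkq' : kf < q := hbd kf (List.mem_cons_self (a := kf))
      have hS1 := len_mul_swap_ge y kf q hkq' hykf
      rw [hcy, hlen] at hS1
      have hge := geLen B v kf hndkB hbB (List.Pairwise.sublist hkB hpw)
      rw [← hy] at hge
      simp only [List.nil_append, List.length_cons] at hS1
      omega
  | a :: A', v, B, q, kf, hnd, hbd, hbB, hpw, hlen => by
    have hcons : (a :: A') ++ kf :: B = a :: (A' ++ kf :: B) := rfl
    have haq : a < q := hbd a (by rw [hcons]; exact List.mem_cons_self)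
    obtain ⟨hq1, hpw'⟩ := List.pairwise_cons.mp hpw
    have hav : v a < v q := hq1 a (by rw [hcons]; exact List.mem_cons_self)
    rw [hcons] at hnd hpw hlen hbd
    obtain ⟨hq1', hpwt⟩ := List.pairwise_cons.mp hpw
    obtain ⟨ha1, hpwtt⟩ := List.pairwise_cons.mp hpwt
    have hamem : a ∉ A' ++ kf :: B := (List.nodup_cons.mp (List.nodup_cons.mp hnd).2).1
    have hqmem : q ∉ A' ++ kf :: B := fun h =>
      (List.nodup_cons.mp hnd).1 (List.mem_cons_of_mem _ h)
    have haq' : a ≠ q := ne_of_lt haq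
    set v1 := v * Equiv.swap a q with hv1
    have hstep : v * cycPerm (a :: (A' ++ kf :: B)) q = v1 * cycPerm (A' ++ kf :: B) q := by
      rw [cycPerm_cons, ← mul_assoc]
    have happ : ∀ x ∈ A' ++ kf :: B, v1 x = v x := by
      intro x hx
      have hxa : x ≠ a := fun h => hamem (h ▸ hx)
      have hxq : x ≠ q := fun h => hqmem (h ▸ hx)
      simp [hv1, Equiv.Perm.mul_apply, Equiv.swap_apply_of_ne_of_ne hxa hxq]
    have happq : v1 q = v a := by
      simp [hv1, Equiv.Perm.mul_apply, Equiv.swap_apply_right]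
    have hpw1 : (q :: (A' ++ kf :: B)).Pairwise (fun x y => v1 y < v1 x) := by
      rw [List.pairwise_cons]
      refine ⟨fun x hx => by rw [happ x hx, happq]; exact ha1 x hx, ?_⟩
      refine hpwtt.imp_of_mem ?_
      intro x y hx hy h
      rw [happ x hx, happ y hy]
      exact h
    have hnd1 : (q :: (A' ++ kf :: B)).Nodup := by
      rw [List.nodup_cons]
      exact ⟨hqmem, (List.nodup_cons.mp (List.nodup_cons.mp hnd).2).2⟩
    have hbd1 : ∀ x ∈ A' ++ kf :: B, x < q := fun x hx => hbd x (List.mem_cons_of_mem _ hx)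
    have hge := geLen (A' ++ kf :: B) v1 q hnd1 hbd1 hpw1
    have hS1 := len_mul_swap_ge v a q haq hav
    rw [← hv1] at hS1
    rw [hstep] at hlen
    simp only [List.length_cons] at hlen
    have hlv1 : len v1 = len v + 1 := by omega
    have hlen1 : len (v1 * cycPerm (A' ++ kf :: B) q) = len v1 + (A' ++ kf :: B).length := by
      omega
    obtain ⟨e1, e2⟩ := splitLen A' v1 B q kf hnd1 hbd1 hbB hpw1 hlen1
    constructor
    · rw [cycPerm_cons, ← mul_assoc, ← hv1, e1, hlv1]
      simp [List.length_cons]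
      omega
    · -- second component
      have hakf : a ≠ kf := by
        intro h
        exact hamem (by rw [h]; exact List.mem_append_right A' (List.mem_cons_self (a := kf)))
      have haB : a ∉ B := fun h =>
        hamem (List.mem_append_right A' (List.mem_cons_of_mem _ h))
      have hqkf : q ≠ kf := by
        intro h
        exact hqmem (by rw [h]; exact List.mem_append_right A' (List.mem_cons_self (a := kf)))
      have hqB : q ∉ B := fun h =>
        hqmem (List.mem_append_right A' (List.mem_cons_of_mem _ h))
      have hcomm : Commute (Equiv.swap a q) (cycPerm B kf) :=
        commute_swap_cycPerm B kf a q haB hakf hqB hqkf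
      set z := v * cycPerm B kf with hz
      have hzswap : z * Equiv.swap a q = v1 * cycPerm B kf := by
        rw [hz, hv1, mul_assoc, mul_assoc, hcomm.eq]
      have hza : z a < z q := by
        have h1 : z a = v a := by
          rw [hz, Equiv.Perm.mul_apply, cycPerm_apply_of_not_mem B kf a haB hakf]
        have h2 : z q = v q := by
          rw [hz, Equiv.Perm.mul_apply, cycPerm_apply_of_not_mem B kf q hqB hqkf]
        rw [h1, h2]; exact hav
      have hS2 := len_mul_swap_ge z a q haq hza
      rw [hzswap, e2, hlv1] at hS2
      have hkB : List.Sublist (kf :: B) (q :: (a :: (A' ++ kf :: B))) := by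
        refine List.Sublist.trans ?_ (List.sublist_cons_self q _)
        refine List.Sublist.trans ?_ (List.sublist_cons_self a _)
        exact List.sublist_append_right A' (kf :: B)
      have hndkB : (kf :: B).Nodup := List.Nodup.sublist hkB (by rw [← hcons] at hnd ⊢; exact hnd)
      have hge2 := geLen B v kf hndkB hbB (List.Pairwise.sublist hkB (by rw [← hcons] at hpw ⊢; exact hpw))
      rw [← hz] at hge2
      omega

theorem stmt2 {n : ℕ} (w : Equiv.Perm (Fin n)) (k : ℕ) (q kf : Fin n)
    (l : List (Fin n)) (hcyc : IsSpecialCycle w k l q)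
    (hkf : (kf : ℕ) = k - 1) (hk1 : 1 ≤ k) (hmem : kf ∈ l) :
    SpecialSuperior w (w * cycPerm l q * Equiv.swap kf q) (k - 1) (l.length - 1) := by
  obtain ⟨hlne, hnd, hlt, hkq, hch, hlen⟩ := hcyc
  haveI : IsTrans (Fin n) (fun a b : Fin n => w b < w a) :=
    ⟨fun _ _ _ h1 h2 => lt_trans h2 h1⟩
  rw [List.Chain', List.isChain_iff_pairwise] at hch
  obtain ⟨A, B, rfl⟩ := List.append_of_mem hmem
  have hnd' : (A ++ kf :: B).Nodup := (List.nodup_cons.mp hnd).2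
  have hqnotmem : q ∉ A ++ kf :: B := (List.nodup_cons.mp hnd).1
  obtain ⟨hndA, hndkB, hdisj⟩ := List.nodup_append.mp hnd'
  have hkfA : kf ∉ A := fun h => hdisj kf h kf (List.mem_cons_self (a := kf)) rfl
  have hkfB : kf ∉ B := (List.nodup_cons.mp hndkB).1
  have hbd : ∀ x ∈ A ++ kf :: B, x < q := fun x hx => by
    rw [Fin.lt_iff_val_lt_val]; exact lt_of_lt_of_le (hlt x hx) hkq
  have hAk : ∀ x ∈ A, (x : ℕ) < k - 1 := by
    intro x hx
    have h1 : (x : ℕ) < k := hlt x (List.mem_append_left _ hx)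
    have h2 : x ≠ kf := fun h => hkfA (h ▸ hx)
    have h3 : (x : ℕ) ≠ (kf : ℕ) := fun h => h2 (Fin.ext h)
    omega
  have hBk : ∀ x ∈ B, (x : ℕ) < k - 1 := by
    intro x hx
    have h1 : (x : ℕ) < k := hlt x (List.mem_append_right _ (List.mem_cons_of_mem _ hx))
    have h2 : x ≠ kf := fun h => hkfB (h ▸ hx)
    have h3 : (x : ℕ) ≠ (kf : ℕ) := fun h => h2 (Fin.ext h)
    omega
  have hbB : ∀ x ∈ B, x < kf := fun x hx => by
    rw [Fin.lt_iff_val_lt_val, hkf]; exact hBk x hx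
  obtain ⟨e1, e2⟩ := splitLen A w B q kf hnd hbd hbB hch hlen
  have hkq' : kf ≠ q := fun h => hqnotmem
    (by rw [← h]; exact List.mem_append_right A (List.mem_cons_self (a := kf)))
  have hqB : q ∉ B := fun h => hqnotmem (List.mem_append_right A (List.mem_cons_of_mem _ h))
  have hconj := swap_conj_cycPerm B kf q hkq' hkfB hqB
  have hprod : w * cycPerm (A ++ kf :: B) q * Equiv.swap kf q
      = w * (cycPerm A q * cycPerm B kf) := by
    rw [cycPerm_append, cycPerm_cons, ← hconj]
    group
  have hsubA : List.Sublist (q :: A) (q :: (A ++ kf :: B)) :=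
    List.Sublist.cons₂ q (List.sublist_append_left A _)
  have hsubB : List.Sublist (kf :: B) (q :: (A ++ kf :: B)) :=
    List.Sublist.trans (List.sublist_append_right A _) (List.sublist_cons_self q _)
  have hpwA := List.Pairwise.sublist hsubA hch
  have hpwB := List.Pairwise.sublist hsubB hch
  have hndA' := List.Nodup.sublist hsubA hnd
  have hndB' := List.Nodup.sublist hsubB hnd
  have hcycA : A ≠ [] → IsSpecialCycle w (k - 1) A q := fun hAne =>
    ⟨hAne, hndA', hAk, by omega, hpwA.isChain, e1⟩
  have hcycB : B ≠ [] → IsSpecialCycle w (k - 1) B kf := fun hBne =>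
    ⟨hBne, hndB', hBk, by omega, hpwB.isChain, e2⟩
  have hdisjAB : ∀ x ∈ q :: A, x ∉ kf :: B := by
    intro x hx hx'
    rcases List.mem_cons.mp hx with h | h
    · subst h
      rcases List.mem_cons.mp hx' with h' | h'
      · exact hkq' h'.symm
      · exact hqB h'
    · exact hdisj x h x hx' rfl
  by_cases hA : A = []
  · subst hA
    by_cases hB : B = []
    · subst hB
      refine ⟨[], by simp, by simp, ?_, by simp⟩
      simp [cycPerm_cons, cycPerm_nil, mul_assoc, Equiv.swap_mul_self]
    · refine ⟨[(B, kf)], ?_, by simp, ?_, by simp⟩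
      · intro c hc
        rw [List.mem_singleton] at hc
        subst hc
        exact hcycB hB
      · simp only [List.map_cons, List.map_nil, List.prod_cons, List.prod_nil, mul_one]
        rw [hprod]
        simp [cycPerm_nil]
  · by_cases hB : B = []
    · subst hB
      refine ⟨[(A, q)], ?_, by simp, ?_, ?_⟩
      · intro c hc
        rw [List.mem_singleton] at hc
        subst hc
        exact hcycA hA
      · simp only [List.map_cons, List.map_nil, List.prod_cons, List.prod_nil, mul_one]
        rw [hprod]
        simp [cycPerm_nil, mul_assoc]
      · simp
    · refine ⟨[(A, q), (B, kf)], ?_, ?_, ?_, ?_⟩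
      · intro c hc
        rcases List.mem_cons.mp hc with h | h
        · subst h; exact hcycA hA
        · rw [List.mem_singleton] at h
          subst h; exact hcycB hB
      · refine List.pairwise_cons.mpr ⟨?_, List.pairwise_singleton _ _⟩
        intro d hd
        rw [List.mem_singleton] at hd
        subst hd
        exact hdisjAB
      · simp only [List.map_cons, List.map_nil, List.prod_cons, List.prod_nil, mul_one]
        rw [hprod]
      · simp only [List.map_cons, List.map_nil, List.sum_cons, List.sum_nil,
          List.length_append, List.length_cons]
        omega
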